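/- arXiv:1302.3903 — 4 statements merged into one kernel-verified Lean document; each statement's English description precedes it below -/
import Mathlib

section
/- Let 1 < p < ∞ and let c(p) = tan(π/(2p)) if p ≤ 2 and c(p) = cot(π/(2p)) if p > 2. Let H : L^p(ℝ, ℂ) → L^p(ℝ, ℂ) be a continuous linear map with ‖H g‖_p ≤ c(p) ‖g‖_p for all g. Let 0 < m ≤ M and let K, K̃ : ℝ → ℂ be measurable functions with Re K(y) ≥ m, Re K̃(y) ≥ m, |K(y)| ≤ M and |K̃(y)| ≤ M for almost every y, whose principal logarithms L = Log K and L̃ = Log K̃ lie in L^p(ℝ, ℂ). Let h and h̃ be measurable representatives of H L and H L̃ respectively and assume |Im h(y)| ≤ c(p)π and |Im h̃(y)| ≤ c(p)π almost everywhere. Define the factors K₊(y) = exp((1/2)L(y) + (i/2)h(y)) and K̃₊(y) = exp((1/2)L̃(y) + (i/2)h̃(y)) (and analogously K₋, K̃₋ with minus signs). If ‖K − K̃‖_p ≤ ε, then ‖K₊ − K̃₊‖_p ≤ (M^{1/2} exp(c(p)π/2)/(2m)) (1 + c(p)) ε, and the same bound holds for ‖K₋ − K̃₋‖_p. -/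
open MeasureTheory Real Complex

/-- The best constant in the Titchmarsh–Riesz theorem. -/
noncomputable def TRconst (p : ℝ) : ℝ :=
  if p ≤ 2 then Real.tan (Real.pi / (2 * p)) else Real.cot (Real.pi / (2 * p))

/-!
Pointwise, `Log` is `m⁻¹`-Lipschitz on the half-plane `Re z ≥ m`, and `exp` is Lipschitz on the
segment `[a, b]` with constant `max |eᵃ| |eᵇ|`. Since `|exp (½ Log z)| = √|z|` and `|Im h| ≤ c π`,
both factors are bounded by `√M e^{cπ/2}`, so a.e.
`|K₊ - K̃₊| ≤ (√M e^{cπ/2} / 2) (|L - L̃| + |h - h̃|)`.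
Taking `L^p` norms and using `‖h - h̃‖_p ≤ c ‖L - L̃‖_p ≤ (c / m) ε` gives the bound;
`K₋` is `K₊` with `h` replaced by `-h`.
-/

theorem TRconst_nonneg {p : ℝ} (hp : 1 < p) : 0 ≤ TRconst p := by
  have hx0 : 0 < π / (2 * p) := by positivity
  have hx2 : π / (2 * p) < π / 2 := div_lt_div_of_pos_left pi_pos two_pos (by linarith)
  unfold TRconst
  split_ifs
  · exact (tan_pos_of_pos_of_lt_pi_div_two hx0 hx2).le
  · rw [Real.cot_eq_cos_div_sin]
    exact div_nonneg (cos_nonneg_of_mem_Icc ⟨by linarith, hx2.le⟩)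
      (sin_pos_of_pos_of_lt_pi hx0 (by linarith)).le

namespace Complex

theorem norm_log_sub_log_le {m : ℝ} (hm : 0 < m) {z w : ℂ} (hz : m ≤ z.re) (hw : m ≤ w.re) :
    ‖log z - log w‖ ≤ m⁻¹ * ‖z - w‖ := by
  refine (convex_halfSpace_re_ge m).norm_image_sub_le_of_norm_hasDerivWithin_le
    (fun x hx => (hasDerivAt_log (Or.inl (hm.trans_le hx))).hasDerivWithinAt) ?_ hw hz
  intro x hx
  rw [norm_inv]
  exact inv_anti₀ hm (le_trans hx (re_le_norm x))

theorem norm_exp_sub_exp_le (a b : ℂ) :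
    ‖exp a - exp b‖ ≤ max ‖exp a‖ ‖exp b‖ * ‖a - b‖ := by
  have hmax : max ‖exp a‖ ‖exp b‖ = Real.exp (max a.re b.re) := by
    simp only [norm_exp, Real.exp_monotone.map_max]
  refine (convex_halfSpace_re_le (max a.re b.re)).norm_image_sub_le_of_norm_hasDerivWithin_le
    (fun x _ => (hasDerivAt_exp x).hasDerivWithinAt) (fun x hx => ?_)
    (le_max_right a.re b.re) (le_max_left a.re b.re)
  rw [hmax, norm_exp]
  exact Real.exp_le_exp.2 hx

end Complex

/-- With `w = H(Log K)(y)` this is `K₊(y)`, and with `w = -H(Log K)(y)` it is `K₋(y)`. -/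
noncomputable def wienerHopfFactor (z w : ℂ) : ℂ :=
  exp ((1 / 2 : ℂ) * log z + (I / 2) * w)

theorem wienerHopfFactor_neg (z w : ℂ) :
    wienerHopfFactor z (-w) = exp ((1 / 2 : ℂ) * log z - (I / 2) * w) := by
  rw [wienerHopfFactor, mul_neg, ← sub_eq_add_neg]

theorem norm_wienerHopfFactor {z : ℂ} (hz : z ≠ 0) (w : ℂ) :
    ‖wienerHopfFactor z w‖ = √‖z‖ * Real.exp (-w.im / 2) := by
  have hre : ((1 / 2 : ℂ) * log z + (I / 2) * w).re = Real.log ‖z‖ / 2 + -w.im / 2 := by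
    simp only [add_re, mul_re, log_re, div_ofNat_re, div_ofNat_im, I_re, I_im, one_div, inv_re,
      inv_im, re_ofNat, im_ofNat, normSq_ofNat, div_self_mul_self', neg_zero, zero_div, zero_mul,
      sub_zero, zero_sub]
    ring
  rw [wienerHopfFactor, norm_exp, hre, Real.exp_add, Real.sqrt_eq_rpow,
    Real.rpow_def_of_pos (norm_pos_iff.2 hz)]
  ring_nf

theorem norm_wienerHopfFactor_le {z w : ℂ} {M C : ℝ} (hz : z ≠ 0) (hzM : ‖z‖ ≤ M)
    (hw : |w.im| ≤ C) : ‖wienerHopfFactor z w‖ ≤ √M * Real.exp (C / 2) := by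
  rw [norm_wienerHopfFactor hz]
  gcongr
  linarith [neg_abs_le w.im]

theorem norm_wienerHopfFactor_sub_le {z z' w w' : ℂ} {M C : ℝ} (hz : z ≠ 0) (hz' : z' ≠ 0)
    (hzM : ‖z‖ ≤ M) (hz'M : ‖z'‖ ≤ M) (hw : |w.im| ≤ C) (hw' : |w'.im| ≤ C) :
    ‖wienerHopfFactor z w - wienerHopfFactor z' w'‖ ≤
      √M * Real.exp (C / 2) / 2 * (‖log z - log z'‖ + ‖w - w'‖) := by
  have hexp : ((1 / 2 : ℂ) * log z + (I / 2) * w) - ((1 / 2 : ℂ) * log z' + (I / 2) * w') =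
      (1 / 2 : ℂ) * (log z - log z') + (I / 2) * (w - w') := by ring
  have hnorm : ‖(1 / 2 : ℂ) * (log z - log z') + (I / 2) * (w - w')‖ ≤
      (‖log z - log z'‖ + ‖w - w'‖) / 2 := by
    refine (norm_add_le _ _).trans_eq ?_
    simp only [norm_mul, norm_div, norm_I, norm_one, Complex.norm_ofNat]
    ring
  calc ‖wienerHopfFactor z w - wienerHopfFactor z' w'‖
      ≤ max ‖wienerHopfFactor z w‖ ‖wienerHopfFactor z' w'‖ *
          ‖((1 / 2 : ℂ) * log z + (I / 2) * w) - ((1 / 2 : ℂ) * log z' + (I / 2) * w')‖ :=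
        norm_exp_sub_exp_le _ _
    _ ≤ √M * Real.exp (C / 2) * ((‖log z - log z'‖ + ‖w - w'‖) / 2) := by
        rw [hexp]
        gcongr
        exact max_le (norm_wienerHopfFactor_le hz hzM hw) (norm_wienerHopfFactor_le hz' hz'M hw')
    _ = _ := by ring

namespace MeasureTheory

open scoped ENNReal

variable {α : Type*} [MeasurableSpace α] {μ : Measure α} {p : ℝ≥0∞}

theorem eLpNorm_log_sub_log_le {K K' : α → ℂ} {m : ℝ} (hm : 0 < m)
    (hK : ∀ᵐ y ∂μ, m ≤ (K y).re) (hK' : ∀ᵐ y ∂μ, m ≤ (K' y).re) :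
    eLpNorm (fun y => Complex.log (K y) - Complex.log (K' y)) p μ ≤
      ENNReal.ofReal m⁻¹ * eLpNorm (fun y => K y - K' y) p μ :=
  eLpNorm_le_mul_eLpNorm_of_ae_le_mul
    (by filter_upwards [hK, hK'] with y hy hy' using Complex.norm_log_sub_log_le hm hy hy') p

theorem _root_.ContinuousLinearMap.eLpNorm_sub_le_of_ae_eq {𝕜 E F : Type*}
    [NontriviallyNormedField 𝕜]
    [NormedAddCommGroup E] [NormedSpace 𝕜 E] [NormedAddCommGroup F] [NormedSpace 𝕜 F]
    [Fact (1 ≤ p)] (H : Lp E p μ →L[𝕜] Lp F p μ) {c : ℝ} (hH : ‖H‖ ≤ c)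
    {f f' : α → E} (hf : MemLp f p μ) (hf' : MemLp f' p μ) {h h' : α → F}
    (hh : h =ᵐ[μ] H (hf.toLp f)) (hh' : h' =ᵐ[μ] H (hf'.toLp f')) :
    eLpNorm (fun y => h y - h' y) p μ ≤ ENNReal.ofReal c * eLpNorm (fun y => f y - f' y) p μ := by
  have hf_sub : eLpNorm (fun y => f y - f' y) p μ = edist (hf.toLp f) (hf'.toLp f') := by
    rw [Lp.edist_def]
    exact eLpNorm_congr_ae (hf.coeFn_toLp.sub hf'.coeFn_toLp).symm
  have hh_sub : eLpNorm (fun y => h y - h' y) p μ = edist (H (hf.toLp f)) (H (hf'.toLp f')) := by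
    rw [Lp.edist_def]
    exact eLpNorm_congr_ae (hh.sub hh')
  rw [hf_sub, hh_sub]
  refine (H.lipschitz.edist_le_mul _ _).trans (mul_le_mul_left ?_ _)
  rw [← enorm_eq_nnnorm, ← ofReal_norm]
  exact ENNReal.ofReal_le_ofReal hH

theorem eLpNorm_wienerHopfFactor_sub_le (hp : 1 ≤ p) {K K' h h' : α → ℂ} {M C : ℝ}
    (hK : ∀ᵐ y ∂μ, K y ≠ 0) (hK' : ∀ᵐ y ∂μ, K' y ≠ 0)
    (hKM : ∀ᵐ y ∂μ, ‖K y‖ ≤ M) (hK'M : ∀ᵐ y ∂μ, ‖K' y‖ ≤ M)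
    (hhC : ∀ᵐ y ∂μ, |(h y).im| ≤ C) (hh'C : ∀ᵐ y ∂μ, |(h' y).im| ≤ C)
    (hL : AEStronglyMeasurable (fun y => Complex.log (K y) - Complex.log (K' y)) μ)
    (hh : AEStronglyMeasurable (fun y => h y - h' y) μ) :
    eLpNorm (fun y => wienerHopfFactor (K y) (h y) - wienerHopfFactor (K' y) (h' y)) p μ ≤
      ENNReal.ofReal (√M * Real.exp (C / 2) / 2) *
        (eLpNorm (fun y => Complex.log (K y) - Complex.log (K' y)) p μ +
          eLpNorm (fun y => h y - h' y) p μ) := by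
  calc _ ≤ ENNReal.ofReal (√M * Real.exp (C / 2) / 2) *
        eLpNorm (fun y => ‖Complex.log (K y) - Complex.log (K' y)‖ + ‖h y - h' y‖) p μ := by
        refine eLpNorm_le_mul_eLpNorm_of_ae_le_mul ?_ p
        filter_upwards [hK, hK', hKM, hK'M, hhC, hh'C] with y h1 h2 h3 h4 h5 h6
        rw [Real.norm_of_nonneg (by positivity)]
        exact norm_wienerHopfFactor_sub_le h1 h2 h3 h4 h5 h6
    _ ≤ ENNReal.ofReal (√M * Real.exp (C / 2) / 2) *
        (eLpNorm (fun y => ‖Complex.log (K y) - Complex.log (K' y)‖) p μ +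
          eLpNorm (fun y => ‖h y - h' y‖) p μ) := by
        gcongr
        exact eLpNorm_add_le hL.norm hh.norm hp
    _ = _ := by rw [eLpNorm_norm, eLpNorm_norm]

theorem eLpNorm_wienerHopfFactor_sub_le_of_eLpNorm_sub_le (hp : 1 ≤ p) {K K' h h' : α → ℂ}
    {m M C c ε : ℝ} (hm : 0 < m) (hc : 0 ≤ c)
    (hKm : ∀ᵐ y ∂μ, m ≤ (K y).re) (hK'm : ∀ᵐ y ∂μ, m ≤ (K' y).re)
    (hKM : ∀ᵐ y ∂μ, ‖K y‖ ≤ M) (hK'M : ∀ᵐ y ∂μ, ‖K' y‖ ≤ M)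
    (hhC : ∀ᵐ y ∂μ, |(h y).im| ≤ C) (hh'C : ∀ᵐ y ∂μ, |(h' y).im| ≤ C)
    (hL : AEStronglyMeasurable (fun y => Complex.log (K y)) μ)
    (hL' : AEStronglyMeasurable (fun y => Complex.log (K' y)) μ)
    (hh : AEStronglyMeasurable h μ) (hh' : AEStronglyMeasurable h' μ)
    (hh_sub : eLpNorm (fun y => h y - h' y) p μ ≤
      ENNReal.ofReal c * eLpNorm (fun y => Complex.log (K y) - Complex.log (K' y)) p μ)
    (hKK' : eLpNorm (fun y => K y - K' y) p μ ≤ ENNReal.ofReal ε) :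
    eLpNorm (fun y => wienerHopfFactor (K y) (h y) - wienerHopfFactor (K' y) (h' y)) p μ ≤
      ENNReal.ofReal (√M * Real.exp (C / 2) / (2 * m) * (1 + c) * ε) := by
  have ae_ne_zero {K : α → ℂ} (hKm : ∀ᵐ y ∂μ, m ≤ (K y).re) : ∀ᵐ y ∂μ, K y ≠ 0 := by
    filter_upwards [hKm] with y hy hy0
    rw [hy0, Complex.zero_re] at hy
    linarith
  have hLL' : eLpNorm (fun y => Complex.log (K y) - Complex.log (K' y)) p μ ≤
      ENNReal.ofReal m⁻¹ * ENNReal.ofReal ε :=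
    (eLpNorm_log_sub_log_le hm hKm hK'm).trans (by gcongr)
  calc _ ≤ ENNReal.ofReal (√M * Real.exp (C / 2) / 2) *
        (eLpNorm (fun y => Complex.log (K y) - Complex.log (K' y)) p μ +
          eLpNorm (fun y => h y - h' y) p μ) :=
        eLpNorm_wienerHopfFactor_sub_le hp (ae_ne_zero hKm) (ae_ne_zero hK'm) hKM hK'M hhC hh'C
          (hL.sub hL') (hh.sub hh')
    _ ≤ ENNReal.ofReal (√M * Real.exp (C / 2) / 2) *
        ((1 + ENNReal.ofReal c) * (ENNReal.ofReal m⁻¹ * ENNReal.ofReal ε)) := by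
        grw [hh_sub, ← hLL', one_add_mul]
    _ = _ := by
        rw [← ENNReal.ofReal_one, ← ENNReal.ofReal_add zero_le_one hc,
          ← ENNReal.ofReal_mul (by positivity), ← ENNReal.ofReal_mul (by positivity),
          ← ENNReal.ofReal_mul (by positivity)]
        congr 1
        field_simp

end MeasureTheory

theorem multiplicative_wiener_hopf_bounds_general (p : ℝ) (hp : 1 < p)
    [Fact (1 ≤ ENNReal.ofReal p)]
    (H : Lp ℂ (ENNReal.ofReal p) (volume : Measure ℝ) →L[ℂ]
         Lp ℂ (ENNReal.ofReal p) (volume : Measure ℝ))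
    (hH : ∀ g, ‖H g‖ ≤ TRconst p * ‖g‖)
    (m M : ℝ) (hm : 0 < m)
    (K Ktilde : ℝ → ℂ)
    (hKlow : ∀ᵐ y : ℝ, m ≤ (K y).re) (hKtlow : ∀ᵐ y : ℝ, m ≤ (Ktilde y).re)
    (hKup : ∀ᵐ y : ℝ, ‖K y‖ ≤ M) (hKtup : ∀ᵐ y : ℝ, ‖Ktilde y‖ ≤ M)
    (hL : MemLp (fun y => Complex.log (K y)) (ENNReal.ofReal p) (volume : Measure ℝ))
    (hLt : MemLp (fun y => Complex.log (Ktilde y)) (ENNReal.ofReal p) (volume : Measure ℝ))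
    (h htilde : ℝ → ℂ)
    (hrep : h =ᵐ[volume] (H (hL.toLp _) : Lp ℂ (ENNReal.ofReal p) (volume : Measure ℝ)))
    (hrept : htilde =ᵐ[volume]
      (H (hLt.toLp _) : Lp ℂ (ENNReal.ofReal p) (volume : Measure ℝ)))
    (hhim : ∀ᵐ y : ℝ, |(h y).im| ≤ TRconst p * Real.pi)
    (hhtim : ∀ᵐ y : ℝ, |(htilde y).im| ≤ TRconst p * Real.pi)
    (ε : ℝ)
    (hdist : eLpNorm (fun y => K y - Ktilde y) (ENNReal.ofReal p) (volume : Measure ℝ) ≤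
      ENNReal.ofReal ε) :
    eLpNorm (fun y =>
        Complex.exp ((1 / 2 : ℂ) * Complex.log (K y) + (Complex.I / 2) * h y) -
        Complex.exp ((1 / 2 : ℂ) * Complex.log (Ktilde y) + (Complex.I / 2) * htilde y))
        (ENNReal.ofReal p) (volume : Measure ℝ) ≤
      ENNReal.ofReal
        (Real.sqrt M * Real.exp (TRconst p * Real.pi / 2) / (2 * m) * (1 + TRconst p) * ε) ∧
    eLpNorm (fun y =>
        Complex.exp ((1 / 2 : ℂ) * Complex.log (K y) - (Complex.I / 2) * h y) -
        Complex.exp ((1 / 2 : ℂ) * Complex.log (Ktilde y) - (Complex.I / 2) * htilde y))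
        (ENNReal.ofReal p) (volume : Measure ℝ) ≤
      ENNReal.ofReal
        (Real.sqrt M * Real.exp (TRconst p * Real.pi / 2) / (2 * m) * (1 + TRconst p) * ε) := by
  have hc := TRconst_nonneg hp
  have hh_sub := H.eLpNorm_sub_le_of_ae_eq (H.opNorm_le_bound hc hH) hL hLt hrep hrept
  have hh : AEStronglyMeasurable h volume := (Lp.aestronglyMeasurable _).congr hrep.symm
  have hh' : AEStronglyMeasurable htilde volume := (Lp.aestronglyMeasurable _).congr hrept.symm
  have hneg : eLpNorm (fun y => -h y - -htilde y) (ENNReal.ofReal p) volume ≤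
      ENNReal.ofReal (TRconst p) *
        eLpNorm (fun y => Complex.log (K y) - Complex.log (Ktilde y)) (ENNReal.ofReal p) volume := by
    simp only [neg_sub_neg]
    exact (eLpNorm_sub_comm htilde h _ _).trans_le hh_sub
  simp only [← wienerHopfFactor_neg]
  exact ⟨eLpNorm_wienerHopfFactor_sub_le_of_eLpNorm_sub_le Fact.out hm hc hKlow hKtlow hKup hKtup
      hhim hhtim hL.1 hLt.1 hh hh' hh_sub hdist,
    eLpNorm_wienerHopfFactor_sub_le_of_eLpNorm_sub_le Fact.out hm hc hKlow hKtlow hKup hKtup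
      (by simpa only [Complex.neg_im, abs_neg] using hhim)
      (by simpa only [Complex.neg_im, abs_neg] using hhtim) hL.1 hLt.1 hh.neg hh'.neg hneg hdist⟩

/-- **Multiplicative bounds in `L^p` for `1 < p < ∞`**: a perturbation of size `ε` of a
Wiener–Hopf kernel `K` (with `Re K ≥ m > 0`, `|K| ≤ M` a.e.) propagates to its Wiener–Hopf
factors `K₊ = exp((1/2)Log K + (i/2)H(Log K))`, `K₋ = exp((1/2)Log K − (i/2)H(Log K))`
with bound `(M^{1/2} exp(c(p)π/2)/(2m)) (1 + c(p)) ε`. -/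
theorem multiplicative_wiener_hopf_bounds (p : ℝ) (hp : 1 < p)
    [Fact (1 ≤ ENNReal.ofReal p)]
    (H : Lp ℂ (ENNReal.ofReal p) (volume : Measure ℝ) →L[ℂ]
         Lp ℂ (ENNReal.ofReal p) (volume : Measure ℝ))
    (hH : ∀ g, ‖H g‖ ≤ TRconst p * ‖g‖)
    (m M : ℝ) (hm : 0 < m) (hmM : m ≤ M)
    (K Ktilde : ℝ → ℂ) (hKmeas : Measurable K) (hKtmeas : Measurable Ktilde)
    (hKlow : ∀ᵐ y : ℝ, m ≤ (K y).re) (hKtlow : ∀ᵐ y : ℝ, m ≤ (Ktilde y).re)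
    (hKup : ∀ᵐ y : ℝ, ‖K y‖ ≤ M) (hKtup : ∀ᵐ y : ℝ, ‖Ktilde y‖ ≤ M)
    (hL : MemLp (fun y => Complex.log (K y)) (ENNReal.ofReal p) (volume : Measure ℝ))
    (hLt : MemLp (fun y => Complex.log (Ktilde y)) (ENNReal.ofReal p) (volume : Measure ℝ))
    (h htilde : ℝ → ℂ) (hhmeas : Measurable h) (hhtmeas : Measurable htilde)
    (hrep : h =ᵐ[volume] (H (hL.toLp _) : Lp ℂ (ENNReal.ofReal p) (volume : Measure ℝ)))
    (hrept : htilde =ᵐ[volume]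
      (H (hLt.toLp _) : Lp ℂ (ENNReal.ofReal p) (volume : Measure ℝ)))
    (hhim : ∀ᵐ y : ℝ, |(h y).im| ≤ TRconst p * Real.pi)
    (hhtim : ∀ᵐ y : ℝ, |(htilde y).im| ≤ TRconst p * Real.pi)
    (ε : ℝ)
    (hdist : eLpNorm (fun y => K y - Ktilde y) (ENNReal.ofReal p) (volume : Measure ℝ) ≤
      ENNReal.ofReal ε) :
    eLpNorm (fun y =>
        Complex.exp ((1 / 2 : ℂ) * Complex.log (K y) + (Complex.I / 2) * h y) -
        Complex.exp ((1 / 2 : ℂ) * Complex.log (Ktilde y) + (Complex.I / 2) * htilde y))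
        (ENNReal.ofReal p) (volume : Measure ℝ) ≤
      ENNReal.ofReal
        (Real.sqrt M * Real.exp (TRconst p * Real.pi / 2) / (2 * m) * (1 + TRconst p) * ε) ∧
    eLpNorm (fun y =>
        Complex.exp ((1 / 2 : ℂ) * Complex.log (K y) - (Complex.I / 2) * h y) -
        Complex.exp ((1 / 2 : ℂ) * Complex.log (Ktilde y) - (Complex.I / 2) * htilde y))
        (ENNReal.ofReal p) (volume : Measure ℝ) ≤
      ENNReal.ofReal
        (Real.sqrt M * Real.exp (TRconst p * Real.pi / 2) / (2 * m) * (1 + TRconst p) * ε) :=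
  multiplicative_wiener_hopf_bounds_general p hp H hH m M hm K Ktilde hKlow hKtlow hKup hKtup hL hLt
    h htilde hrep hrept hhim hhtim ε hdist
end

section
/- Let τ₋ < 0 < τ₊ be real numbers, and let U₊ = {z ∈ ℂ : Im z > τ₋}, U₋ = {z ∈ ℂ : Im z < τ₊}, so the strip is U₊ ∩ U₋. Suppose F₊ : ℂ → ℂ is holomorphic on U₊, F₋ : ℂ → ℂ is holomorphic on U₋, F₊(z)·F₋(z) = 1 for all z in the strip, and there exist holomorphic functions L₊ on U₊ and L₋ on U₋ with exp(L₊) = F₊ on U₊, exp(L₋) = F₋ on U₋, and constants C > 0 and 0 ≤ ρ < 1 with |L₊(z)| ≤ C(1 + |z|)^ρ on U₊ and |L₋(z)| ≤ C(1 + |z|)^ρ on U₋. Then F₊ is constant on U₊ and F₋ is constant on U₋; that is, there exists c ∈ ℂ, c ≠ 0, with F₊ ≡ c and F₋ ≡ c⁻¹. -/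
/-! On the strip, `exp (L₊ + L₋) = F₊ F₋ = 1`, so `L₊ + L₋` is a constant `κ` there. Hence `L₊` on
the upper half-plane and `κ - L₋` on the lower one glue to an entire function of growth
`O(|z|^ρ)` with `ρ < 1`, which is constant by the Cauchy estimate for its derivative on large
circles. Exponentiating, `F₊` and `F₋` are constant. -/

open Complex Filter Asymptotics Bornology Set

theorem Differentiable.apply_eq_apply_of_isLittleO_id {F : Type*} [NormedAddCommGroup F]
    [NormedSpace ℂ F] {f : ℂ → F} (hf : Differentiable ℂ f)
    (hsub : f =o[cobounded ℂ] id) (z w : ℂ) : f z = f w := by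
  refine is_const_of_deriv_eq_zero hf (fun c => norm_le_zero_iff.1 ?_) z w
  refine le_of_forall_pos_le_add fun ε hε => ?_
  obtain ⟨R₀, hR₀⟩ : ∃ R₀, ∀ x : ℂ, R₀ ≤ ‖x‖ → ‖f x‖ ≤ ε / 2 * ‖x‖ := by
    have := hsub.def (half_pos hε)
    rw [← comap_norm_atTop] at this
    obtain ⟨R₀, hR₀⟩ := by simpa only [eventually_comap, eventually_atTop, id] using this
    exact ⟨R₀, fun x hx => hR₀ ‖x‖ hx x rfl⟩
  set R := max R₀ 1 + ‖c‖
  have hR : 0 < R := by positivity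
  have hsphere : ∀ x ∈ Metric.sphere c R, ‖f x‖ ≤ ε * R := by
    intro x hx
    have hxc : ‖x - c‖ = R := mem_sphere_iff_norm.1 hx
    have hlow : R₀ ≤ ‖x‖ := by
      have := norm_sub_le x c
      linarith [le_max_left R₀ 1]
    have hup : ‖x‖ ≤ 2 * R := by
      have := norm_le_norm_add_norm_sub' x c
      have : ‖c‖ ≤ R := by linarith [le_max_right R₀ 1]
      linarith
    calc ‖f x‖ ≤ ε / 2 * ‖x‖ := hR₀ x hlow
      _ ≤ ε / 2 * (2 * R) := by gcongr
      _ = ε * R := by ring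
  calc ‖_root_.deriv f c‖ ≤ ε * R / R :=
        Complex.norm_deriv_le_of_forall_mem_sphere_norm_le hR hf.diffContOnCl hsphere
    _ = 0 + ε := by field_simp; ring

theorem isLittleO_id_of_norm_le_add_rpow {E F : Type*} [NormedAddCommGroup E]
    [NormedAddCommGroup F] {f : E → F} {A C ρ : ℝ} (hρ : ρ < 1)
    (hf : ∀ z, ‖f z‖ ≤ A + C * (1 + ‖z‖) ^ ρ) : f =o[cobounded E] id := by
  have hpow : (fun x : ℝ => x ^ ρ) =o[atTop] id := by
    have hdecay : (fun x : ℝ => x ^ (ρ - 1)) =o[atTop] (fun _ => (1 : ℝ)) :=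
      (isLittleO_one_iff ℝ).2 (by simpa using tendsto_rpow_neg_atTop (y := 1 - ρ) (by linarith))
    refine (hdecay.mul_isBigO (isBigO_refl id atTop)).congr' ?_ (by simp only [one_mul]; rfl)
    filter_upwards [eventually_gt_atTop 0] with x hx
    simp only [id]
    rw [Real.rpow_sub hx, Real.rpow_one, div_mul_cancel₀ _ hx.ne']
  have hshift : (fun x : ℝ => (1 + x) ^ ρ) =o[atTop] id :=
    (hpow.comp_tendsto (tendsto_atTop_add_const_left _ 1 tendsto_id)).trans_isBigO
      ((isLittleO_const_id_atTop 1).isBigO.add (isBigO_refl id atTop))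
  have hmajorant : (fun x : ℝ => A + C * (1 + x) ^ ρ) =o[atTop] id :=
    (isLittleO_const_id_atTop A).add (hshift.const_mul_left C)
  refine (IsBigO.of_bound' (Eventually.of_forall fun z => ?_)).trans_isLittleO
    (isLittleO_norm_right.1 (hmajorant.comp_tendsto tendsto_norm_cobounded_atTop))
  exact (hf z).trans (le_abs_self _)

theorem apply_eq_apply_of_cexp_eq_const {U : Set ℂ} (hU : IsOpen U)
    (hUc : IsPreconnected U) {g : ℂ → ℂ} (hg : DifferentiableOn ℂ g U) {c : ℂ}
    (hexp : ∀ z ∈ U, exp (g z) = c) {z w : ℂ} (hz : z ∈ U) (hw : w ∈ U) : g z = g w := by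
  refine hU.is_const_of_deriv_eq_zero hUc hg (fun x hx => ?_) hz hw
  have hgx : HasDerivAt g (deriv g x) x := (hg.differentiableAt (hU.mem_nhds hx)).hasDerivAt
  -- `exp ∘ g` is locally constant, and `exp (g x) ≠ 0` in its derivative `exp (g x) * g' x`
  have hconst : (fun y => exp (g y)) =ᶠ[nhds x] fun _ => c :=
    eventually_of_mem (hU.mem_nhds hx) hexp
  have := (hgx.cexp.congr_of_eventuallyEq hconst.symm).unique (hasDerivAt_const x c)
  exact (mul_eq_zero.1 this).resolve_left (exp_ne_zero _)

theorem exists_differentiable_eqOn_of_eqOn_inter {𝕜 E F : Type*} [NontriviallyNormedField 𝕜]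
    [NormedAddCommGroup E] [NormedSpace 𝕜 E] [NormedAddCommGroup F] [NormedSpace 𝕜 F]
    {U V : Set E} (hU : IsOpen U) (hV : IsOpen V) (hUV : U ∪ V = univ) {f g : E → F}
    (hf : DifferentiableOn 𝕜 f U) (hg : DifferentiableOn 𝕜 g V) (hfg : EqOn f g (U ∩ V)) :
    ∃ G : E → F, Differentiable 𝕜 G ∧ EqOn G f U ∧ EqOn G g V := by
  classical
  have hGf : EqOn (U.piecewise f g) f U := piecewise_eqOn U f g
  have hGg : EqOn (U.piecewise f g) g V := fun z hz => by
    by_cases hzU : z ∈ U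
    · rw [piecewise_eq_of_mem U f g hzU, hfg ⟨hzU, hz⟩]
    · exact piecewise_eq_of_notMem U f g hzU
  refine ⟨U.piecewise f g, fun z => ?_, hGf, hGg⟩
  rcases (Set.eq_univ_iff_forall.1 hUV z) with hzU | hzV
  · exact (hf.differentiableAt (hU.mem_nhds hzU)).congr_of_eventuallyEq
      (eventually_of_mem (hU.mem_nhds hzU) hGf)
  · exact (hg.differentiableAt (hV.mem_nhds hzV)).congr_of_eventuallyEq
      (eventually_of_mem (hV.mem_nhds hzV) hGg)

theorem wiener_hopf_factorisation_unique_general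
    (τm τp : ℝ) (hτm : τm < 0) (hτp : 0 < τp)
    (Fp Fm Lp Lm : ℂ → ℂ)
    (hprod : ∀ z : ℂ, τm < z.im → z.im < τp → Fp z * Fm z = 1)
    (hLp : DifferentiableOn ℂ Lp {z : ℂ | τm < z.im})
    (hLm : DifferentiableOn ℂ Lm {z : ℂ | z.im < τp})
    (hexpP : ∀ z : ℂ, τm < z.im → Complex.exp (Lp z) = Fp z)
    (hexpM : ∀ z : ℂ, z.im < τp → Complex.exp (Lm z) = Fm z)
    (C ρ : ℝ) (hρ1 : ρ < 1)
    (hgrowthP : ∀ z : ℂ, τm < z.im → ‖Lp z‖ ≤ C * (1 + ‖z‖) ^ ρ)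
    (hgrowthM : ∀ z : ℂ, z.im < τp → ‖Lm z‖ ≤ C * (1 + ‖z‖) ^ ρ) :
    ∃ c : ℂ, c ≠ 0 ∧ (∀ z : ℂ, τm < z.im → Fp z = c) ∧
      (∀ z : ℂ, z.im < τp → Fm z = c⁻¹) := by
  set Up : Set ℂ := {z | τm < z.im}
  set Um : Set ℂ := {z | z.im < τp}
  have hUp : IsOpen Up := isOpen_lt continuous_const continuous_im
  have hUm : IsOpen Um := isOpen_lt continuous_im continuous_const
  have hstrip : IsPreconnected (Up ∩ Um) :=
    ((convex_halfSpace_im_gt τm).inter (convex_halfSpace_im_lt τp)).isPreconnected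
  have h0 : (0 : ℂ) ∈ Up ∩ Um := ⟨show τm < (0 : ℂ).im by simpa, show (0 : ℂ).im < τp by simpa⟩
  set κ := Lp 0 + Lm 0
  have hsum : ∀ z ∈ Up ∩ Um, Lp z + Lm z = κ := fun z hz =>
    apply_eq_apply_of_cexp_eq_const (hUp.inter hUm) hstrip
      ((hLp.mono inter_subset_left).add (hLm.mono inter_subset_right))
      (fun w hw => by rw [Pi.add_apply, exp_add, hexpP w hw.1, hexpM w hw.2, hprod w hw.1 hw.2])
      hz h0
  have hcover : Up ∪ Um = univ :=
    eq_univ_of_forall fun z => (lt_or_ge τm z.im).imp id fun h => show z.im < τp by linarith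
  obtain ⟨G, hG, hGp, hGm⟩ := exists_differentiable_eqOn_of_eqOn_inter hUp hUm hcover hLp
    (hLm.const_sub κ) fun z hz => eq_sub_of_add_eq (hsum z hz)
  have hGbound : ∀ z, ‖G z‖ ≤ ‖κ‖ + C * (1 + ‖z‖) ^ ρ := by
    intro z
    rcases (eq_univ_iff_forall.1 hcover z) with hz | hz
    · rw [hGp hz]; linarith [hgrowthP z hz, norm_nonneg κ]
    · rw [hGm hz]; linarith [norm_sub_le κ (Lm z), hgrowthM z hz]
  have hGconst : ∀ z, G z = Lp 0 := fun z =>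
    (hG.apply_eq_apply_of_isLittleO_id (isLittleO_id_of_norm_le_add_rpow hρ1 hGbound) z 0).trans
      (hGp h0.1)
  refine ⟨exp (Lp 0), exp_ne_zero _, fun z hz => ?_, fun z hz => ?_⟩
  · rw [← hexpP z hz, ← hGp hz, hGconst]
  · have hLmz : Lm z = Lm 0 := by
      have := hGm hz
      rw [hGconst] at this
      linear_combination this
    rw [← hexpM z hz, hLmz, hexpM 0 h0.2, hexpP 0 h0.1]
    exact eq_inv_of_mul_eq_one_right (hprod 0 h0.1 h0.2)

/-- **Uniqueness of the Wiener–Hopf factorisation up to a constant**: if `F₊` is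
holomorphic on the upper half-plane `Im z > τ₋`, `F₋` is holomorphic on the lower
half-plane `Im z < τ₊`, `F₊ F₋ = 1` on the strip, and both admit holomorphic logarithms
of subexponential growth `O((1+|z|)^ρ)` with `ρ < 1`, then `F₊` and `F₋` are constants
`c` and `c⁻¹` respectively. -/
theorem wiener_hopf_factorisation_unique
    (τm τp : ℝ) (hτm : τm < 0) (hτp : 0 < τp)
    (Fp Fm Lp Lm : ℂ → ℂ)
    (hFp : DifferentiableOn ℂ Fp {z : ℂ | τm < z.im})
    (hFm : DifferentiableOn ℂ Fm {z : ℂ | z.im < τp})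
    (hprod : ∀ z : ℂ, τm < z.im → z.im < τp → Fp z * Fm z = 1)
    (hLp : DifferentiableOn ℂ Lp {z : ℂ | τm < z.im})
    (hLm : DifferentiableOn ℂ Lm {z : ℂ | z.im < τp})
    (hexpP : ∀ z : ℂ, τm < z.im → Complex.exp (Lp z) = Fp z)
    (hexpM : ∀ z : ℂ, z.im < τp → Complex.exp (Lm z) = Fm z)
    (C ρ : ℝ) (hC : 0 < C) (hρ0 : 0 ≤ ρ) (hρ1 : ρ < 1)
    (hgrowthP : ∀ z : ℂ, τm < z.im → ‖Lp z‖ ≤ C * (1 + ‖z‖) ^ ρ)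
    (hgrowthM : ∀ z : ℂ, z.im < τp → ‖Lm z‖ ≤ C * (1 + ‖z‖) ^ ρ) :
    ∃ c : ℂ, c ≠ 0 ∧ (∀ z : ℂ, τm < z.im → Fp z = c) ∧
      (∀ z : ℂ, z.im < τp → Fm z = c⁻¹) :=
  wiener_hopf_factorisation_unique_general τm τp hτm hτp Fp Fm Lp Lm hprod hLp hLm hexpP hexpM C ρ
    hρ1 hgrowthP hgrowthM
end

section
/- For every real y ≠ 0, e^{−iπ/2} · Γ(1/2 − iy/π) · Γ(1/2 + iy/π) · (i + y)^{1/2} · (i − y)^{1/2} / (π · Γ(1 − iy/π) · Γ(1 + iy/π)) = √(y² + 1) · tanh(y)/y, where Γ is the complex Gamma function and the powers (i ± y)^{1/2} are principal-branch complex powers. -/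
open Complex

/-!
Euler's reflection formula makes both Gamma products elementary: with `z = iy/π`,
`Γ(1/2 - z) Γ(1/2 + z) = π / cos(πz) = π / cosh y` and `Γ(1 - z) Γ(1 + z) = πz / sin(πz) = y / sinh y`.
Since `arg(i + y) + arg(i - y) = π`, the two principal square roots combine into the principal
square root of `(i + y)(i - y) = -(y² + 1)`, which is `i √(y² + 1)`; finally `e^{-iπ/2} = -i`.
-/

namespace Complex

open Real ComplexConjugate

theorem Gamma_one_half_add_mul_Gamma_one_half_sub (z : ℂ) :
    Gamma (1 / 2 + z) * Gamma (1 / 2 - z) = π / cos (π * z) := by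
  rw [show (1 / 2 - z : ℂ) = 1 - (1 / 2 + z) by ring, Gamma_mul_Gamma_one_sub,
    show (π * (1 / 2 + z) : ℂ) = π * z + π / 2 by ring, sin_add_pi_div_two]

theorem Gamma_one_add_mul_Gamma_one_sub {z : ℂ} (hz : z ≠ 0) :
    Gamma (1 + z) * Gamma (1 - z) = π * z / sin (π * z) := by
  rw [add_comm, Gamma_add_one z hz, mul_assoc, Gamma_mul_Gamma_one_sub, mul_div_assoc']
  ring

theorem cpow_mul_cpow_of_arg_add_mem {a b : ℂ} (ha : a ≠ 0) (hb : b ≠ 0)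
    (h : arg a + arg b ∈ Set.Ioc (-π) π) (c : ℂ) :
    a ^ c * b ^ c = (a * b) ^ c := by
  rw [cpow_def_of_ne_zero ha, cpow_def_of_ne_zero hb, cpow_def_of_ne_zero (mul_ne_zero ha hb),
    log_mul ha hb h, add_mul, exp_add]

theorem arg_add_arg_neg_conj {w : ℂ} (hw : 0 < w.im) : arg w + arg (-conj w) = π := by
  have hπ : arg w ≠ π := fun h => hw.ne' (arg_eq_pi_iff.mp h).2
  rw [arg_neg_eq_arg_add_pi_of_im_neg (by simpa using hw), arg_conj, if_neg hπ]
  ring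

theorem cpow_one_half_mul_cpow_one_half_neg_conj {w : ℂ} (hw : 0 < w.im) :
    w ^ (1 / 2 : ℂ) * (-conj w) ^ (1 / 2 : ℂ) = ‖w‖ * I := by
  have hw0 : w ≠ 0 := fun h => by simp [h] at hw
  rw [cpow_mul_cpow_of_arg_add_mem hw0 (by simpa using hw0)
      (by rw [arg_add_arg_neg_conj hw]; exact ⟨by linarith [Real.pi_pos], le_rfl⟩),
    mul_neg, mul_conj, ← ofReal_neg, ofReal_cpow_of_nonpos (by simpa using normSq_nonneg w),
    ofReal_neg, neg_neg, show (π * I * (1 / 2) : ℂ) = π / 2 * I by ring, exp_pi_div_two_mul_I,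
    norm_def, Real.sqrt_eq_rpow, ofReal_cpow (normSq_nonneg w)]
  norm_num

theorem pi_mul_I_mul_div_pi (y : ℂ) : π * (I * y / π) = y * I := by
  field_simp [ofReal_ne_zero.mpr pi_ne_zero]

theorem Gamma_one_half_sub_mul_Gamma_one_half_add_I_mul_div_pi (y : ℂ) :
    Gamma (1 / 2 - I * y / π) * Gamma (1 / 2 + I * y / π) = π / cosh y := by
  rw [mul_comm, Gamma_one_half_add_mul_Gamma_one_half_sub, pi_mul_I_mul_div_pi, cos_mul_I]

theorem Gamma_one_sub_mul_Gamma_one_add_I_mul_div_pi {y : ℂ} (hy : y ≠ 0) :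
    Gamma (1 - I * y / π) * Gamma (1 + I * y / π) = y / sinh y := by
  have hz : I * y / π ≠ 0 := by simp [hy, pi_ne_zero]
  rw [mul_comm, Gamma_one_add_mul_Gamma_one_sub hz, pi_mul_I_mul_div_pi, sin_mul_I,
    mul_div_mul_right _ _ I_ne_zero]

theorem I_add_ofReal_cpow_one_half_mul_I_sub_ofReal_cpow_one_half (y : ℝ) :
    (I + y) ^ (1 / 2 : ℂ) * (I - y) ^ (1 / 2 : ℂ) = √(y ^ 2 + 1) * I := by
  have h := cpow_one_half_mul_cpow_one_half_neg_conj (w := I + y) (by simp)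
  have hnorm : ‖I + y‖ = √(y ^ 2 + 1) := by
    rw [norm_def, normSq_apply]
    simp only [add_re, add_im, I_re, I_im, ofReal_re, ofReal_im]
    ring_nf
  rwa [map_add, conj_I, conj_ofReal, neg_add, neg_neg, ← sub_eq_add_neg, hnorm] at h

end Complex

/-- **Exact Wiener–Hopf factorisation of Koiter's kernel**: for real `y ≠ 0`,
`e^{−iπ/2} Γ(1/2 − iy/π) Γ(1/2 + iy/π) (i + y)^{1/2} (i − y)^{1/2} / (π Γ(1 − iy/π) Γ(1 + iy/π))
  = √(y² + 1) tanh(y)/y`,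
with principal-branch complex powers. -/
theorem koiter_kernel_factorisation (y : ℝ) (hy : y ≠ 0) :
    Complex.exp (-(Real.pi / 2 : ℂ) * Complex.I) *
        Complex.Gamma (1 / 2 - Complex.I * (y : ℂ) / (Real.pi : ℂ)) *
        Complex.Gamma (1 / 2 + Complex.I * (y : ℂ) / (Real.pi : ℂ)) *
        (Complex.I + (y : ℂ)) ^ (1 / 2 : ℂ) *
        (Complex.I - (y : ℂ)) ^ (1 / 2 : ℂ) /
        ((Real.pi : ℂ) * Complex.Gamma (1 - Complex.I * (y : ℂ) / (Real.pi : ℂ)) *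
          Complex.Gamma (1 + Complex.I * (y : ℂ) / (Real.pi : ℂ))) =
      ((Real.sqrt (y ^ 2 + 1) * Real.tanh y / y : ℝ) : ℂ) := by
  calc _ = exp (-Real.pi / 2 * I) *
          (Gamma (1 / 2 - I * y / Real.pi) * Gamma (1 / 2 + I * y / Real.pi)) *
          ((I + y) ^ (1 / 2 : ℂ) * (I - y) ^ (1 / 2 : ℂ)) /
          (Real.pi * (Gamma (1 - I * y / Real.pi) * Gamma (1 + I * y / Real.pi))) := by
        rw [neg_div]; ring
    _ = -I * (Real.pi / cosh y) * (Real.sqrt (y ^ 2 + 1) * I) / (Real.pi * (y / sinh y)) := by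
        rw [exp_neg_pi_div_two_mul_I, Gamma_one_half_sub_mul_Gamma_one_half_add_I_mul_div_pi,
          I_add_ofReal_cpow_one_half_mul_I_sub_ofReal_cpow_one_half,
          Gamma_one_sub_mul_Gamma_one_add_I_mul_div_pi (ofReal_ne_zero.mpr hy)]
    _ = _ := by
        rw [Real.tanh_eq_sinh_div_cosh]
        push_cast
        field_simp
        rw [I_sq]
        ring
end

section
/- Let δ > 0 and ρ > 0. Let u : ℂ → ℂ be holomorphic on the strip {z ∈ ℂ : |Im z| < δ}, and suppose there is a function h holomorphic on the open disc {w ∈ ℂ : |w| < ρ} such that u(x) = h(1/x) for every real x with |x| > 1/ρ. Define v : ℝ → ℂ by v(θ) = u(cot θ) for θ ∉ πℤ and v(θ) = h(0) for θ ∈ πℤ. Then the Fourier coefficients of v over a period π decay geometrically: there exist C > 0 and 0 < r < 1 such that |∫_0^π v(θ) e^{−2inθ} dθ| ≤ C r^{|n|} for every n ∈ ℤ. -/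
open Complex Filter intervalIntegral Set Metric Topology

/-!
With `q = exp (2iθ)` one has `cot θ = cotMap q` for a Möbius map `cotMap` sending the unit circle
onto `ℝ ∪ {∞}`, with `1 ↦ ∞`; so `v θ = G q` with `G = u ∘ cotMap`. Away from `q = 1` this `G` is
holomorphic near the circle because `u` is holomorphic on the strip. Near `q = 1` take
`G = h ∘ cotMap⁻¹` instead: the two agree on the overlap because, by the identity theorem, the
relation `u x = h x⁻¹` on the far real axis extends to the far ends of the strip. Thus `G` is
holomorphic on an annulus `R⁻¹ ≤ |q| ≤ R`, and the Cauchy estimates on its two boundary circles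
bound the Laurent coefficients of `G`, i.e. the Fourier coefficients of `v`, by `C R^{-|n|}`.
-/

theorem eqOn_of_eventuallyEq_ofReal {f g : ℂ → ℂ} {U : Set ℂ} (hU : IsOpen U)
    (hUc : IsPreconnected U) (hf : DifferentiableOn ℂ f U) (hg : DifferentiableOn ℂ g U)
    {x₀ : ℝ} (hx₀ : (x₀ : ℂ) ∈ U) (hfg : ∀ᶠ x : ℝ in 𝓝 x₀, f x = g x) : EqOn f g U := by
  have hofReal : Tendsto ((↑) : ℝ → ℂ) (𝓝[≠] x₀) (𝓝[≠] (x₀ : ℂ)) :=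
    tendsto_nhdsWithin_of_tendsto_nhds_of_eventually_within _
      (continuous_ofReal.continuousWithinAt.tendsto)
      (eventually_nhdsWithin_of_forall fun x hx => by simpa using hx)
  exact (hf.analyticOnNhd hU).eqOn_of_preconnected_of_frequently_eq (hg.analyticOnNhd hU) hUc hx₀
    (hofReal.frequently (hfg.filter_mono nhdsWithin_le_nhds).frequently)

theorem Convex.reProdIm {s t : Set ℝ} (hs : Convex ℝ s) (ht : Convex ℝ t) :
    Convex ℝ (s ×ℂ t) := by
  rw [← convexHull_eq_self, convexHull_reProdIm, hs.convexHull_eq, ht.convexHull_eq]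

theorem DifferentiableOn.exists_eqOn_union {𝕜 E F : Type*} [NontriviallyNormedField 𝕜]
    [NormedAddCommGroup E] [NormedSpace 𝕜 E] [NormedAddCommGroup F] [NormedSpace 𝕜 F]
    {f₁ f₂ : E → F} {U₁ U₂ : Set E} (hU₁ : IsOpen U₁) (hU₂ : IsOpen U₂)
    (hf₁ : DifferentiableOn 𝕜 f₁ U₁) (hf₂ : DifferentiableOn 𝕜 f₂ U₂) (h : EqOn f₁ f₂ (U₁ ∩ U₂)) :
    ∃ g, DifferentiableOn 𝕜 g (U₁ ∪ U₂) ∧ EqOn g f₁ U₁ ∧ EqOn g f₂ U₂ := by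
  classical
  have hg₁ : EqOn (U₁.piecewise f₁ f₂) f₁ U₁ := piecewise_eqOn U₁ f₁ f₂
  have hg₂ : EqOn (U₁.piecewise f₁ f₂) f₂ U₂ := fun x hx => by
    by_cases hx₁ : x ∈ U₁
    · rw [hg₁ hx₁, h ⟨hx₁, hx⟩]
    · exact piecewise_eq_of_notMem _ _ _ hx₁
  refine ⟨U₁.piecewise f₁ f₂, ?_, hg₁, hg₂⟩
  rintro x (hx | hx)
  · exact ((hf₁.differentiableAt (hU₁.mem_nhds hx)).congr_of_eventuallyEq
      (eventuallyEq_of_mem (hU₁.mem_nhds hx) hg₁)).differentiableWithinAt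
  · exact ((hf₂.differentiableAt (hU₂.mem_nhds hx)).congr_of_eventuallyEq
      (eventuallyEq_of_mem (hU₂.mem_nhds hx) hg₂)).differentiableWithinAt

theorem exists_annulus_subset_of_sphere_subset {U : Set ℂ} (hU : IsOpen U)
    (hS : sphere (0 : ℂ) 1 ⊆ U) : ∃ R, 1 < R ∧ closedBall 0 R \ ball 0 R⁻¹ ⊆ U := by
  obtain ⟨ε, hε, hεU⟩ := (isCompact_sphere 0 1).exists_thickening_subset_open hU hS
  refine ⟨1 + ε / 2, by linarith, fun q ⟨hqR, hqr⟩ => hεU (mem_thickening_iff.2 ?_)⟩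
  rw [mem_closedBall_zero_iff] at hqR
  rw [mem_ball_zero_iff, not_lt] at hqr
  have hr : 1 - ε / 2 ≤ (1 + ε / 2)⁻¹ := by
    rw [← one_div, le_div_iff₀ (by positivity)]
    nlinarith
  have hq : 0 < ‖q‖ := (by positivity : (0:ℝ) < (1 + ε / 2)⁻¹).trans_le hqr
  refine ⟨q / ‖q‖, by simp [hq.ne'], ?_⟩
  have hdist : dist q (q / ‖q‖) = |‖q‖ - 1| := by
    have hsub : q - q / ‖q‖ = ((‖q‖ - 1) / ‖q‖ : ℝ) * q := by
      have : (‖q‖ : ℂ) ≠ 0 := by exact_mod_cast hq.ne'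
      push_cast
      field_simp
    rw [dist_eq_norm, hsub, norm_mul, norm_real, Real.norm_eq_abs, abs_div, abs_of_pos hq]
    field_simp
  rw [hdist, abs_lt]
  constructor <;> linarith

theorem DifferentiableOn.circleIntegral_eq_of_mem_Icc {E : Type*} [NormedAddCommGroup E]
    [NormedSpace ℂ E] [CompleteSpace E] {f : ℂ → E} {c : ℂ} {r R s₁ s₂ : ℝ}
    (hf : DifferentiableOn ℂ f (closedBall c R \ ball c r)) (hr : 0 < r)
    (h₁ : s₁ ∈ Icc r R) (h₂ : s₂ ∈ Icc r R) : (∮ z in C(c, s₁), f z) = ∮ z in C(c, s₂), f z := by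
  wlog h : s₁ ≤ s₂ generalizing s₁ s₂
  · exact (this h₂ h₁ (le_of_not_ge h)).symm
  refine (circleIntegral_eq_of_differentiable_on_annulus_off_countable (hr.trans_le h₁.1) h
    countable_empty (hf.continuousOn.mono ?_) fun z hz => hf.differentiableAt ?_).symm
  · exact sdiff_subset_sdiff (closedBall_subset_closedBall h₂.2) (ball_subset_ball h₁.1)
  · refine mem_of_superset ((isOpen_ball.sdiff isClosed_closedBall).mem_nhds hz.1) ?_
    exact sdiff_subset_sdiff (ball_subset_closedBall.trans (closedBall_subset_closedBall h₂.2))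
      ((ball_subset_ball h₁.1).trans ball_subset_closedBall)

theorem circleIntegral_mul_zpow_eq_intervalIntegral (f : ℂ → ℂ) (n : ℤ) :
    (∮ z in C(0, 1), f z * z ^ (-n - 1)) =
      I * ∫ φ in (0 : ℝ)..2 * Real.pi, f (exp (φ * I)) * exp (-n * φ * I) := by
  rw [circleIntegral, ← integral_const_mul]
  refine integral_congr fun φ _ => ?_
  have hzpow : exp (φ * I) * exp (φ * I) ^ (-n - 1) = exp (-n * φ * I) := by
    rw [← zpow_one_add₀ (exp_ne_zero _), ← exp_int_mul]
    push_cast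
    ring_nf
  simp only [deriv_circleMap, circleMap_zero, ofReal_one, one_mul, smul_eq_mul]
  rw [← hzpow]
  ring

theorem norm_intervalIntegral_fourier_le {f : ℂ → ℂ} {r R s M : ℝ}
    (hf : DifferentiableOn ℂ f (closedBall 0 R \ ball 0 r)) (hr : 0 < r)
    (hM : ∀ z ∈ closedBall 0 R \ ball 0 r, ‖f z‖ ≤ M) (h₁ : 1 ∈ Icc r R) (hs : s ∈ Icc r R)
    (n : ℤ) :
    ‖∫ φ in (0 : ℝ)..2 * Real.pi, f (exp (φ * I)) * exp (-n * φ * I)‖ ≤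
      2 * Real.pi * M * s ^ (-n) := by
  have hs₀ : 0 < s := hr.trans_le hs.1
  have hzero : (0 : ℂ) ∉ closedBall 0 R \ ball 0 r := fun h => h.2 (mem_ball_self hr)
  have hdiff : DifferentiableOn ℂ (fun z => f z * z ^ (-n - 1)) (closedBall 0 R \ ball 0 r) :=
    hf.mul (differentiableOn_zpow _ _ (.inl hzero))
  have hbound : ∀ z ∈ sphere (0 : ℂ) s, ‖f z * z ^ (-n - 1)‖ ≤ M * s ^ (-n - 1) := by
    intro z hz
    rw [mem_sphere_zero_iff_norm] at hz
    rw [norm_mul, norm_zpow, hz]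
    refine mul_le_mul_of_nonneg_right (hM z ⟨?_, ?_⟩) (by positivity)
    · exact mem_closedBall_zero_iff.2 (hz.trans_le hs.2)
    · exact fun h => (mem_ball_zero_iff.1 h).not_ge (hz ▸ hs.1)
  calc ‖∫ φ in (0 : ℝ)..2 * Real.pi, f (exp (φ * I)) * exp (-n * φ * I)‖
      = ‖∮ z in C(0, s), f z * z ^ (-n - 1)‖ := by
        rw [← hdiff.circleIntegral_eq_of_mem_Icc hr h₁ hs,
          circleIntegral_mul_zpow_eq_intervalIntegral, norm_mul, norm_I, one_mul]
    _ ≤ 2 * Real.pi * s * (M * s ^ (-n - 1)) :=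
        circleIntegral.norm_integral_le_of_norm_le_const hs₀.le hbound
    _ = 2 * Real.pi * M * s ^ (-n) := by
        rw [zpow_sub_one₀ hs₀.ne']
        field_simp

theorem exists_zpow_neg_eq_inv_pow_natAbs {R : ℝ} (hR : 1 ≤ R) (n : ℤ) :
    ∃ s ∈ Icc R⁻¹ R, s ^ (-n) = R⁻¹ ^ n.natAbs := by
  have hRinv : R⁻¹ ≤ R := (inv_le_one_of_one_le₀ hR).trans hR
  rcases Int.natAbs_eq n with hn | hn
  · exact ⟨R, ⟨hRinv, le_rfl⟩, by rw [hn, zpow_neg, zpow_natCast, inv_pow, Int.natAbs_natCast]⟩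
  · exact ⟨R⁻¹, ⟨le_rfl, hRinv⟩,
      by rw [hn, neg_neg, zpow_natCast, Int.natAbs_neg, Int.natAbs_natCast]⟩

theorem exists_norm_intervalIntegral_fourier_le {f : ℂ → ℂ} {R : ℝ} (hR : 1 < R)
    (hf : DifferentiableOn ℂ f (closedBall 0 R \ ball 0 R⁻¹)) :
    ∃ C, 0 < C ∧ ∀ n : ℤ,
      ‖∫ φ in (0 : ℝ)..2 * Real.pi, f (exp (φ * I)) * exp (-n * φ * I)‖ ≤ C * R⁻¹ ^ n.natAbs := by
  obtain ⟨M, hM⟩ := ((isCompact_closedBall 0 R).diff isOpen_ball).exists_bound_of_continuousOn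
    hf.continuousOn
  refine ⟨2 * Real.pi * max M 1, by positivity, fun n => ?_⟩
  obtain ⟨s, hs, hsn⟩ := exists_zpow_neg_eq_inv_pow_natAbs hR.le n
  rw [← hsn]
  exact norm_intervalIntegral_fourier_le hf (by positivity)
    (fun z hz => (hM z hz).trans (le_max_left M 1)) ⟨inv_le_one_of_one_le₀ hR.le, hR.le⟩ hs n

noncomputable def cotMap (q : ℂ) : ℂ := (q + 1) / (I * (1 - q))

theorem cot_eq_cotMap (z : ℂ) : cot z = cotMap (exp (2 * I * z)) := cot_eq_exp_ratio z

theorem inv_cotMap (q : ℂ) : (cotMap q)⁻¹ = I * (1 - q) / (q + 1) := inv_div _ _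

theorem cotMap_ne_zero {q : ℂ} (h₁ : q ≠ 1) (h₂ : q ≠ -1) : cotMap q ≠ 0 :=
  div_ne_zero (by simpa [add_eq_zero_iff_eq_neg] using h₂)
    (mul_ne_zero I_ne_zero (sub_ne_zero.2 (Ne.symm h₁)))

theorem im_cotMap_of_norm_eq_one {q : ℂ} (hq : ‖q‖ = 1) : (cotMap q).im = 0 := by
  have hexp : exp (2 * I * ((arg q / 2 : ℝ) : ℂ)) = q := by
    conv_rhs => rw [← norm_mul_exp_arg_mul_I q, hq]
    push_cast
    ring_nf
  rw [← hexp, ← cot_eq_cotMap, ← ofReal_cot, ofReal_im]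

theorem differentiableOn_cotMap : DifferentiableOn ℂ cotMap {q | q ≠ 1} := fun q hq => by
  unfold cotMap
  exact (DifferentiableAt.div (c := fun q => q + 1) (d := fun q => I * (1 - q)) (by fun_prop)
    (by fun_prop) (mul_ne_zero I_ne_zero (sub_ne_zero.2 (Ne.symm hq)))).differentiableWithinAt

theorem differentiableOn_inv_cotMap : DifferentiableOn ℂ (fun q => (cotMap q)⁻¹) {q | q ≠ -1} := by
  simp_rw [inv_cotMap]
  exact fun q hq => (DifferentiableAt.div (by fun_prop) (by fun_prop)
    (by simpa [add_eq_zero_iff_eq_neg] using hq)).differentiableWithinAt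

theorem exp_two_mul_mul_I_eq_one_iff (θ : ℝ) :
    exp ((2 * θ : ℝ) * I) = 1 ↔ ∃ k : ℤ, θ = k * Real.pi := by
  rw [exp_eq_one_iff]
  refine exists_congr fun k => ⟨fun hk => ?_, fun hk => by rw [hk]; push_cast; ring⟩
  have : ((θ : ℝ) : ℂ) = ((k * Real.pi : ℝ) : ℂ) := by
    push_cast at hk ⊢
    linear_combination (-I / 2) * hk + (θ - k * Real.pi) * I_sq
  exact_mod_cast this

section AnalyticAtInfinity

variable {δ ρ : ℝ} {u h : ℂ → ℂ} (hδ : 0 < δ) (hρ : 0 < ρ)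
  (hu : DifferentiableOn ℂ u {z : ℂ | |z.im| < δ}) (hh : DifferentiableOn ℂ h (ball 0 ρ))
  (huh : ∀ x : ℝ, 1 / ρ < |x| → u x = h ((1 / x : ℝ) : ℂ))
include hδ hρ hu hh huh

theorem eqOn_comp_inv_reProdIm {s : Set ℝ} (hs : IsOpen s) (hsc : Convex ℝ s) {x₀ : ℝ}
    (hx₀ : x₀ ∈ s) (hsρ : ∀ x ∈ s, 1 / ρ < |x|) :
    EqOn u (fun z => h z⁻¹) (s ×ℂ Ioo (-δ) δ) := by
  have hsub : s ×ℂ Ioo (-δ) δ ⊆ {z : ℂ | |z.im| < δ} := fun z hz => abs_lt.2 hz.2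
  have hnorm : ∀ z ∈ s ×ℂ Ioo (-δ) δ, 1 / ρ < ‖z‖ := fun z hz =>
    (hsρ _ hz.1).trans_le (abs_re_le_norm z)
  have hinv : MapsTo (·⁻¹) (s ×ℂ Ioo (-δ) δ) (ball 0 ρ) := fun z hz => by
    rw [mem_ball_zero_iff, norm_inv]
    exact inv_lt_of_inv_lt₀ hρ (by rw [← one_div]; exact hnorm z hz)
  refine eqOn_of_eventuallyEq_ofReal (hs.reProdIm isOpen_Ioo)
    (hsc.reProdIm (convex_Ioo _ _)).isPreconnected (hu.mono hsub)
    (hh.comp (differentiableOn_inv.mono ?_) hinv) (x₀ := x₀)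
    ⟨by simpa using hx₀, by simpa using hδ⟩ ?_
  · exact fun z hz => norm_pos_iff.1 ((one_div_pos.2 hρ).trans (hnorm z hz))
  · filter_upwards [hs.mem_nhds hx₀] with x hx
    simp [huh x (hsρ x hx)]

theorem eq_comp_inv_of_lt_abs_re {z : ℂ} (him : |z.im| < δ) (hre : 1 / ρ < |z.re|) :
    u z = h z⁻¹ := by
  rcases lt_abs.1 hre with hpos | hneg
  · exact eqOn_comp_inv_reProdIm hδ hρ hu hh huh isOpen_Ioi (convex_Ioi _)
      (lt_add_one (1 / ρ)) (fun x hx => hx.trans_le (le_abs_self x)) ⟨hpos, abs_lt.1 him⟩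
  · exact eqOn_comp_inv_reProdIm hδ hρ hu hh huh (s := Iio (-(1 / ρ))) isOpen_Iio (convex_Iio _)
      (neg_lt_neg (lt_add_one (1 / ρ)))
      (fun x hx => (lt_neg.1 hx).trans_le (neg_le_abs x)) ⟨lt_neg.1 hneg, abs_lt.1 him⟩

theorem eq_comp_inv_of_lt_norm {z : ℂ} (him : |z.im| < min δ 1) (hz : 1 + 1 / ρ < ‖z‖) :
    u z = h z⁻¹ :=
  eq_comp_inv_of_lt_abs_re hδ hρ hu hh huh (him.trans_le (min_le_left _ _)) <| by
    linarith [norm_le_abs_re_add_abs_im z, min_le_right δ 1]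

theorem exists_differentiableOn_eq_comp_cotMap :
    ∃ U, IsOpen U ∧ sphere (0 : ℂ) 1 ⊆ U ∧ ∃ G, DifferentiableOn ℂ G U ∧ G 1 = h 0 ∧
      ∀ q ∈ sphere (0 : ℂ) 1, q ≠ 1 → G q = u (cotMap q) := by
  set U₁ := {q : ℂ | q ≠ -1} ∩ (fun q => (cotMap q)⁻¹) ⁻¹' ball 0 (1 + 1 / ρ)⁻¹
  set U₂ := {q : ℂ | q ≠ 1} ∩ cotMap ⁻¹' {z | |z.im| < min δ 1}
  have hU₁ : IsOpen U₁ :=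
    differentiableOn_inv_cotMap.continuousOn.isOpen_inter_preimage isOpen_ne isOpen_ball
  have hU₂ : IsOpen U₂ := differentiableOn_cotMap.continuousOn.isOpen_inter_preimage isOpen_ne
    (isOpen_lt continuous_im.abs continuous_const)
  have hρ₁ : (1 + 1 / ρ)⁻¹ ≤ ρ := by
    simpa using inv_anti₀ (by positivity : 0 < 1 / ρ) (by linarith : 1 / ρ ≤ 1 + 1 / ρ)
  have hf₁ : DifferentiableOn ℂ (fun q => h (cotMap q)⁻¹) U₁ :=
    hh.comp (differentiableOn_inv_cotMap.mono inter_subset_left)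
      fun q hq => ball_subset_ball hρ₁ hq.2
  have hf₂ : DifferentiableOn ℂ (fun q => u (cotMap q)) U₂ :=
    hu.comp (differentiableOn_cotMap.mono inter_subset_left)
      fun q hq => show |(cotMap q).im| < δ from lt_of_lt_of_le hq.2 (min_le_left _ _)
  have hEq : EqOn (fun q => h (cotMap q)⁻¹) (fun q => u (cotMap q)) (U₁ ∩ U₂) := by
    rintro q ⟨⟨hq_ne_neg_one, hqρ⟩, hq_ne_one, hqδ⟩
    have hnorm : 0 < ‖cotMap q‖ := norm_pos_iff.2 (cotMap_ne_zero hq_ne_one hq_ne_neg_one)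
    rw [mem_preimage, mem_ball_zero_iff, norm_inv, inv_lt_inv₀ hnorm (by positivity)] at hqρ
    exact (eq_comp_inv_of_lt_norm hδ hρ hu hh huh hqδ hqρ).symm
  obtain ⟨G, hG, hG₁, hG₂⟩ := hf₁.exists_eqOn_union hU₁ hU₂ hf₂ hEq
  have hreal : ∀ q ∈ sphere (0 : ℂ) 1, q ≠ 1 → q ∈ U₂ := fun q hq hq₁ =>
    ⟨hq₁, by simp [im_cotMap_of_norm_eq_one (mem_sphere_zero_iff_norm.1 hq), hδ]⟩
  have hone : (1 : ℂ) ∈ U₁ := ⟨by norm_num, by simp [cotMap]; positivity⟩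
  refine ⟨U₁ ∪ U₂, hU₁.union hU₂, fun q hq => ?_, G, hG, by simpa [cotMap] using hG₁ hone,
    fun q hq hq₁ => hG₂ (hreal q hq hq₁)⟩
  rcases eq_or_ne q 1 with rfl | hq₁
  · exact .inl hone
  · exact .inr (hreal q hq hq₁)

end AnalyticAtInfinity

theorem eq_comp_exp_two_mul_I {u h G : ℂ → ℂ} {v : ℝ → ℂ} (hG₁ : G 1 = h 0)
    (hGu : ∀ q ∈ sphere (0 : ℂ) 1, q ≠ 1 → G q = u (cotMap q))
    (hv : ∀ θ : ℝ, (¬ ∃ k : ℤ, θ = k * Real.pi) → v θ = u ((Real.cot θ : ℝ) : ℂ))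
    (hvπ : ∀ k : ℤ, v (k * Real.pi) = h 0) (θ : ℝ) : v θ = G (exp ((2 * θ : ℝ) * I)) := by
  by_cases hk : ∃ k : ℤ, θ = k * Real.pi
  · obtain ⟨k, rfl⟩ := hk
    rw [hvπ, (exp_two_mul_mul_I_eq_one_iff _).2 ⟨k, rfl⟩, hG₁]
  · rw [hv θ hk, hGu _ (mem_sphere_zero_iff_norm.2 (norm_exp_ofReal_mul_I _))
      (mt (exp_two_mul_mul_I_eq_one_iff θ).1 hk), ofReal_cot, cot_eq_cotMap]
    push_cast
    ring_nf

/-- **Boyd's theorem (geometric-convergence case)**: if `u` is holomorphic on a strip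
`|Im z| < δ` around the real axis and analytic at infinity (i.e. `u(x) = h(1/x)` for large
real `x`, with `h` holomorphic on a disc of radius `ρ` about `0`), then the Fourier
coefficients over a period `π` of `v(θ) = u(cot θ)` (extended by `h(0)` at `θ ∈ πℤ`)
decay geometrically. -/
theorem boyd_geometric_convergence (δ ρ : ℝ) (hδ : 0 < δ) (hρ : 0 < ρ)
    (u h : ℂ → ℂ)
    (hu : DifferentiableOn ℂ u {z : ℂ | |z.im| < δ})
    (hh : DifferentiableOn ℂ h (Metric.ball (0 : ℂ) ρ))
    (huh : ∀ x : ℝ, 1 / ρ < |x| → u (x : ℂ) = h ((1 / x : ℝ) : ℂ))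
    (v : ℝ → ℂ)
    (hv : ∀ θ : ℝ, (¬ ∃ k : ℤ, θ = k * Real.pi) → v θ = u ((Real.cot θ : ℝ) : ℂ))
    (hvπ : ∀ k : ℤ, v (k * Real.pi) = h 0) :
    ∃ C : ℝ, 0 < C ∧ ∃ r : ℝ, 0 < r ∧ r < 1 ∧ ∀ n : ℤ,
      ‖(∫ θ in (0 : ℝ)..Real.pi,
          v θ * Complex.exp (-2 * (n : ℂ) * (θ : ℂ) * Complex.I))‖ ≤
        C * r ^ n.natAbs := by
  obtain ⟨U, hU, hSU, G, hG, hG₁, hGu⟩ := exists_differentiableOn_eq_comp_cotMap hδ hρ hu hh huh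
  obtain ⟨R, hR, hRU⟩ := exists_annulus_subset_of_sphere_subset hU hSU
  obtain ⟨C, hC, hbound⟩ := exists_norm_intervalIntegral_fourier_le hR (hG.mono hRU)
  refine ⟨C / 2, by positivity, R⁻¹, by positivity, inv_lt_one_of_one_lt₀ hR, fun n => ?_⟩
  have hsubst : (∫ θ in (0 : ℝ)..Real.pi, v θ * exp (-2 * n * θ * I)) =
      (2 : ℝ)⁻¹ • ∫ φ in (0 : ℝ)..2 * Real.pi, G (exp (φ * I)) * exp (-n * φ * I) := by
    have hscale := integral_comp_mul_left (a := 0) (b := Real.pi)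
      (fun φ : ℝ => G (exp (φ * I)) * exp (-n * φ * I)) two_ne_zero
    rw [mul_zero] at hscale
    rw [← hscale]
    refine integral_congr fun θ _ => ?_
    rw [eq_comp_exp_two_mul_I hG₁ hGu hv hvπ]
    push_cast
    ring_nf
  rw [hsubst, norm_smul, Real.norm_of_nonneg (by norm_num)]
  linarith [hbound n]
end
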